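/- arXiv:2303.07391 — 4 statements merged into one kernel-verified Lean document; each statement's English description precedes it below -/
import Mathlib

section
/- Second bound of Theorem 1 (diagram-existence bound). Let V be a finite vertex type, let E be a finite multiset of unordered pairs of vertices (elements of Sym2 V; multiple edges and self-loops allowed) — the internal edges — and let ext : V → ℕ give the number of external legs at each vertex. Let S be a subset of V of cardinality N ≥ 1 (the EFT insertion vertices), and assume every vertex not in S has total degree at least 2. Set s = Σ_v ext(v), I = card(E) counted with multiplicity, and define the loop number as the integer L = I − card(V) + 1. Then 2·(L + N − 1) ≥ (Σ_{v ∈ S} deg(v)) − s; equivalently, L ≥ ½(Σ_{v∈S} deg(v) − s) − N + 1. In particular, every Feynman graph with s external legs and N insertions of operators of lengths ℓ_1, …, ℓ_N satisfies L ≥ ½(Σ_i ℓ_i − s) − N + 1. -/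
/-! Handshake lemma: the total degree is `s + 2 I`. Every vertex outside `S` contributes at least
`2`, so `∑_{v ∈ S} deg v + 2 (|V| - N) ≤ s + 2 I`, which is the bound after rearranging. -/

theorem Sym2.card_bind_equivMultiset {V : Type*} (E : Multiset (Sym2 V)) :
    Multiset.card (E.bind fun e => (Sym2.equivMultiset V e : Multiset V)) =
      2 * Multiset.card E := by
  have hcard :
      ∀ e ∈ E, (Multiset.card ∘ fun e => (Sym2.equivMultiset V e : Multiset V)) e = 2 :=
    fun e _ => (Sym2.equivMultiset V e).2
  rw [Multiset.card_bind, Multiset.map_congr rfl hcard, Multiset.map_const', Multiset.sum_replicate,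
    smul_eq_mul, mul_comm]

theorem sum_degree_eq_sum_ext_add_two_mul_card {V : Type*} [Fintype V] [DecidableEq V]
    (E : Multiset (Sym2 V)) (ext deg : V → ℕ)
    (hdeg : ∀ v, deg v =
      ext v + (E.bind fun e => ((Sym2.equivMultiset V) e : Multiset V)).count v) :
    ∑ v, deg v = ∑ v, ext v + 2 * Multiset.card E := by
  simp only [hdeg, Finset.sum_add_distrib,
    Multiset.sum_count_eq_card fun v _ => Finset.mem_univ v, Sym2.card_bind_equivMultiset]

theorem Finset.sum_add_two_mul_card_compl_le_sum_univ {V : Type*} [Fintype V] [DecidableEq V]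
    (S : Finset V) (deg : V → ℕ) (hrenorm : ∀ v ∉ S, 2 ≤ deg v) :
    ∑ v ∈ S, deg v + 2 * (Fintype.card V - S.card) ≤ ∑ v, deg v := by
  rw [← S.sum_add_sum_compl, ← S.card_compl, mul_comm, ← smul_eq_mul]
  gcongr
  exact Sᶜ.card_nsmul_le_sum deg 2 fun v hv => hrenorm v (Finset.mem_compl.1 hv)

theorem second_bound_diagram_existence_general
    {V : Type*} [Fintype V] [DecidableEq V]
    (E : Multiset (Sym2 V)) (ext : V → ℕ)
    (S : Finset V) (N : ℕ) (hSN : S.card = N)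
    (deg : V → ℕ)
    (hdeg : ∀ v, deg v =
      ext v + (E.bind fun e => ((Sym2.equivMultiset V) e : Multiset V)).count v)
    (hrenorm : ∀ v ∉ S, 2 ≤ deg v)
    (s I : ℕ) (hs : s = ∑ v, ext v) (hI : I = Multiset.card E)
    (L : ℤ) (hL : L = (I : ℤ) - (Fintype.card V : ℤ) + 1) :
    2 * (L + (N : ℤ) - 1) ≥ (∑ v ∈ S, (deg v : ℤ)) - (s : ℤ) := by
  have hbound := S.sum_add_two_mul_card_compl_le_sum_univ deg hrenorm
  rw [sum_degree_eq_sum_ext_add_two_mul_card E ext deg hdeg, ← hs, ← hI, hSN] at hbound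
  have hNV : N ≤ Fintype.card V := hSN ▸ S.card_le_univ
  rw [← Nat.cast_sum, hL]
  omega

/-- Second bound of Theorem 1 (diagram-existence bound).
A Feynman multigraph: finite vertex type `V`, internal edges given by a
multiset `E` of unordered pairs (`Sym2 V`, multiple edges and self-loops
allowed), and `ext v` external legs at each vertex.  The total degree of `v`
is `ext v` plus the number of internal edge-endpoints at `v` (a self-loop
counting twice).  If `S` is the set of `N ≥ 1` EFT insertion vertices and
every vertex outside `S` has total degree at least 2, then with
`s = Σ_v ext v`, `I = card E` and loop number `L = I − card V + 1` we have
`2·(L + N − 1) ≥ (Σ_{v ∈ S} deg v) − s`. -/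
theorem second_bound_diagram_existence
    {V : Type*} [Fintype V] [DecidableEq V]
    (E : Multiset (Sym2 V)) (ext : V → ℕ)
    (S : Finset V) (N : ℕ) (hSN : S.card = N) (hN : 1 ≤ N)
    (deg : V → ℕ)
    (hdeg : ∀ v, deg v =
      ext v + (E.bind fun e => ((Sym2.equivMultiset V) e : Multiset V)).count v)
    (hrenorm : ∀ v ∉ S, 2 ≤ deg v)
    (s I : ℕ) (hs : s = ∑ v, ext v) (hI : I = Multiset.card E)
    (L : ℤ) (hL : L = (I : ℤ) - (Fintype.card V : ℤ) + 1) :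
    2 * (L + (N : ℤ) - 1) ≥ (∑ v ∈ S, (deg v : ℤ)) - (s : ℤ) :=
  second_bound_diagram_existence_general E ext S N hSN deg hdeg hrenorm s I hs hI L hL
end

section
/- Combinatorial core of Lemma 3 (cut-vertex decomposition bound). Let s, ℓ₁, E, k, I_G, V_G, I_γ, V_γ be natural numbers and define the integers L_G = I_G − V_G + 1 and L_γ = I_γ − V_γ + k. Assume: (a) V_G = V_γ + 1, E ≤ ℓ₁, and I_G = I_γ + (ℓ₁ − E) (the graph G is obtained from a graph γ by adding a single insertion vertex of total degree ℓ₁ that carries E external legs and is joined to γ by ℓ₁ − E internal edges); (b) L_γ ≥ 0 (the loop number of γ, where k is its number of connected components, is non-negative); (c) k ≥ 1 (the insertion vertex is not the whole graph); and (d) 2k ≤ s − E (each of the k connected components of γ is attached to at least two of the remaining s − E external legs, as required for G not to be scaleless). Then L_G ≥ ℓ₁ − s + 1. Consequently, every non-scaleless connected Feynman graph with s external legs and an insertion vertex of degree ℓ₁ > s has at least ℓ₁ − s + 1 loops, so the amplitude A_s[𝒪_{i_1},…,𝒪_{i_N}] vanishes at all loop orders L ≤ max(ℓ₁,…,ℓ_N)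 − s. -/
/-- Combinatorial core of Lemma 3 (cut-vertex decomposition bound).
`G` is obtained from a graph `γ` (with `k` connected components, `I_γ`
internal edges and `V_γ` vertices) by adding a single insertion vertex of
total degree `ℓ₁` carrying `E` external legs, joined to `γ` by `ℓ₁ − E`
internal edges.  If the loop number `L_γ = I_γ − V_γ + k` is non-negative,
`k ≥ 1`, and each of the `k` components of `γ` is attached to at least two of
the remaining `s − E` external legs (`2k ≤ s − E`, needed for `G` not to be
scaleless), then the loop number `L_G = I_G − V_G + 1` of `G` satisfies
`L_G ≥ ℓ₁ − s + 1`. -/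
theorem cut_vertex_decomposition_bound
    (s ℓ₁ E k I_G V_G I_γ V_γ : ℕ)
    (L_G L_γ : ℤ)
    (hLG : L_G = (I_G : ℤ) - (V_G : ℤ) + 1)
    (hLγ : L_γ = (I_γ : ℤ) - (V_γ : ℤ) + (k : ℤ))
    (hV : V_G = V_γ + 1)
    (hE : E ≤ ℓ₁)
    (hI : I_G = I_γ + (ℓ₁ - E))
    (hLγ0 : 0 ≤ L_γ)
    (hk : 1 ≤ k)
    (hext : 2 * (k : ℤ) ≤ (s : ℤ) - (E : ℤ)) :
    L_G ≥ (ℓ₁ : ℤ) - (s : ℤ) + 1 := by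
  -- Each of the `ℓ₁ - E` connecting edges adds a loop, except one per component of `γ`.
  have hgluing : L_G = L_γ + ((ℓ₁ : ℤ) - E) - k := by
    subst hLG hLγ hV hI
    push_cast [Nat.cast_sub hE]
    ring
  have hk_le : (k : ℤ) ≤ s - E - 1 := by omega
  calc L_G = L_γ + ((ℓ₁ : ℤ) - E) - k := hgluing
    _ ≥ 0 + ((ℓ₁ : ℤ) - E) - (s - E - 1) := by gcongr
    _ = ℓ₁ - s + 1 := by ring
end

section
/- Triangular-system lemma underlying the proof of Corollary 2 (single insertions). Let F be a field and ℓ ≥ 3 a natural number. Let A : ℕ → ℕ → ℕ → F and Z : ℕ → ℕ → F. Assume: (a) for all s, i, L with s < i and L + s ≤ i, A s i L = 0 (vanishing of amplitudes below the loop bound of Lemma 3); (b) for every s ≥ 3, A s s 0 ≠ 0 (non-vanishing tree-level contact terms of an on-shell basis); (c) for every s ≥ 3 and every L with 1 ≤ L and L + s ≤ ℓ, the master equation Σ_{m=1}^{L} Σ_{i=3}^{ℓ} (Z i m) · (A s i (L−m)) = 0 holds (finiteness of the renormalized amplitude at each loop order). Then Z s L = 0 for all s ≥ 3 and all L with 1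 ≤ L and L + s ≤ ℓ. That is, the residue of the simple 1/ε pole of the counterterm mixing a length-ℓ operator into a length-s operator vanishes at every loop order L ≤ ℓ − s. -/
/-!
Order the residues `Z s L` lexicographically by loop order `L`, then by length `s`. In the master
equation for `(s, L)`, every term `Z i m * A s i (L - m)` other than `Z s L * A s s 0` vanishes:
either `Z i m` is an earlier residue of the triangle `m + i ≤ ℓ`, or the amplitude lies below the
loop bound `L - m + s ≤ i` and is zero. Since the contact term `A s s 0` is non-zero, `Z s L = 0`.
-/

open Finset

namespace TriangularSystem

variable {F : Type*} [Semiring F] {ℓ : ℕ} {A : ℕ → ℕ → ℕ → F} {Z : ℕ → ℕ → F} {s L : ℕ}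

theorem inner_sum_eq_zero_of_lt (hA : ∀ s i L, s < i → L + s ≤ i → A s i L = 0)
    {m : ℕ} (hm : m < L) (hLs : L + s ≤ ℓ) (hZ : ∀ i, 3 ≤ i → m + i ≤ ℓ → Z i m = 0) :
    ∑ i ∈ Icc 3 ℓ, Z i m * A s i (L - m) = 0 := by
  refine sum_eq_zero fun i hi ↦ ?_
  rw [mem_Icc] at hi
  by_cases hmi : m + i ≤ ℓ
  · rw [hZ i hi.1 hmi, zero_mul]
  · rw [hA s i (L - m) (by omega) (by omega), mul_zero]

theorem inner_sum_eq_single (hA : ∀ s i L, s < i → L + s ≤ i → A s i L = 0)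
    (hs : 3 ≤ s) (hLs : L + s ≤ ℓ) (hZ : ∀ i, 3 ≤ i → i < s → Z i L = 0) :
    ∑ i ∈ Icc 3 ℓ, Z i L * A s i 0 = Z s L * A s s 0 := by
  refine sum_eq_single_of_mem s (mem_Icc.mpr ⟨hs, by omega⟩) fun i hi hne ↦ ?_
  rw [mem_Icc] at hi
  rcases hne.lt_or_gt with hlt | hgt
  · rw [hZ i hi.1 hlt, zero_mul]
  · rw [hA s i 0 hgt (by omega), mul_zero]

theorem master_sum_eq_contact_term (hA : ∀ s i L, s < i → L + s ≤ i → A s i L = 0)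
    (hs : 3 ≤ s) (hL : 1 ≤ L) (hLs : L + s ≤ ℓ)
    (hZlower : ∀ m, 1 ≤ m → m < L → ∀ i, 3 ≤ i → m + i ≤ ℓ → Z i m = 0)
    (hZshorter : ∀ i, 3 ≤ i → i < s → Z i L = 0) :
    ∑ m ∈ Icc 1 L, ∑ i ∈ Icc 3 ℓ, Z i m * A s i (L - m) = Z s L * A s s 0 := by
  rw [sum_eq_single_of_mem L (mem_Icc.mpr ⟨hL, le_rfl⟩), Nat.sub_self,
    inner_sum_eq_single hA hs hLs hZshorter]
  intro m hm hne
  rw [mem_Icc] at hm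
  exact inner_sum_eq_zero_of_lt hA (lt_of_le_of_ne hm.2 hne) hLs (hZlower m hm.1 (by omega))

end TriangularSystem

theorem triangular_system_single_insertion_general
    {F : Type*} [Field F] (ℓ : ℕ)
    (A : ℕ → ℕ → ℕ → F) (Z : ℕ → ℕ → F)
    (hA : ∀ s i L, s < i → L + s ≤ i → A s i L = 0)
    (hcontact : ∀ s, 3 ≤ s → A s s 0 ≠ 0)
    (hmaster : ∀ s L, 3 ≤ s → 1 ≤ L → L + s ≤ ℓ →
      ∑ m ∈ Finset.Icc 1 L, ∑ i ∈ Finset.Icc 3 ℓ, Z i m * A s i (L - m) = 0) :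
    ∀ s L, 3 ≤ s → 1 ≤ L → L + s ≤ ℓ → Z s L = 0 := by
  intro s L
  induction L using Nat.strong_induction_on generalizing s with
  | _ L ihL =>
    induction s using Nat.strong_induction_on with
    | _ s ihs =>
      intro hs hL hLs
      have hZlower : ∀ m, 1 ≤ m → m < L → ∀ i, 3 ≤ i → m + i ≤ ℓ → Z i m = 0 :=
        fun m hm hmL i hi hmi ↦ ihL m hmL i hi hm hmi
      have hZshorter : ∀ i, 3 ≤ i → i < s → Z i L = 0 :=
        fun i hi his ↦ ihs i his hi hL (by omega)
      have hcontact_term := hmaster s L hs hL hLs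
      rw [TriangularSystem.master_sum_eq_contact_term hA hs hL hLs hZlower hZshorter] at hcontact_term
      exact (mul_eq_zero.mp hcontact_term).resolve_right (hcontact s hs)

/-- Triangular-system lemma underlying the proof of Corollary 2 (single
insertions).  `A s i L` is the finite part of the `L`-loop `s`-point
amplitude with one insertion of a length-`i` operator, and `Z i L` is the
residue of the simple `1/ε` pole at `L` loops of the counterterm mixing the
length-`ℓ` operator into the length-`i` operator.  Assuming the amplitudes
vanish below the loop bound of Lemma 3, the tree-level contact terms of an
on-shell basis are non-zero, and the master equations (finiteness of the
renormalized amplitude) hold, all counterterm residues `Z s L` with `s ≥ 3`,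
`L ≥ 1`, `L + s ≤ ℓ` vanish. -/
theorem triangular_system_single_insertion
    {F : Type*} [Field F] (ℓ : ℕ) (hℓ : 3 ≤ ℓ)
    (A : ℕ → ℕ → ℕ → F) (Z : ℕ → ℕ → F)
    (hA : ∀ s i L, s < i → L + s ≤ i → A s i L = 0)
    (hcontact : ∀ s, 3 ≤ s → A s s 0 ≠ 0)
    (hmaster : ∀ s L, 3 ≤ s → 1 ≤ L → L + s ≤ ℓ →
      ∑ m ∈ Finset.Icc 1 L, ∑ i ∈ Finset.Icc 3 ℓ, Z i m * A s i (L - m) = 0) :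
    ∀ s L, 3 ≤ s → 1 ≤ L → L + s ≤ ℓ → Z s L = 0 :=
  triangular_system_single_insertion_general ℓ A Z hA hcontact hmaster
end

section
/- Abstract form of the two-insertion non-renormalization theorem (Section 3.2, N = 2). Let F be a field, let ℓ₁ ≥ ℓ₂ ≥ 3 be natural numbers, and let M ≥ ℓ₁ be a natural number. Let A¹, A² : ℕ → ℕ → ℕ → F and Z¹, Z² : ℕ → ℕ → F. Assume: (a) A¹ s i L = 0 whenever s < i and L + s ≤ i; (b) A² s i L = 0 whenever s < max(i, ℓ₂) and L + s ≤ max(i, ℓ₂) (vanishing below the loop bound of Lemma 3); (c) A¹ s s 0 ≠ 0 for every s ≥ 3 (non-vanishing contact terms of an on-shell basis); (d) Z¹ i m = 0 whenever 1 ≤ m and m + i ≤ ℓ₁ (the single-insertion non-renormalization result); (e) for every s ≥ 3 and every L with 1 ≤ L and L + s ≤ ℓ₁, the master equation Σ_{m=1}^{L} Σ_{i=3}^{M} ( (Z¹ i m)·(A² s i (L−m)) + (Z² i m)·(A¹ s i (L−m)) ) = 0 holds. Then Z² s L = 0 for all s ≥ 3 and all L with 1 ≤ L and L + s ≤ ℓ₁.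 That is, the residue of the simple 1/ε pole of the counterterm mixing two operators of lengths ℓ₁ ≥ ℓ₂ into a length-s operator vanishes at every loop order L ≤ max(ℓ₁, ℓ₂) − s. -/
/-!
Induct on the weight `L + s`. In the master equation for `(s, L)` every `Z¹`-term dies: either
`Z¹ i m` is a protected single-insertion residue, or `i` is so long that the amplitude `A² s i (L - m)`
lies below its loop bound. Every `Z²`-term other than `(i, m) = (s, L)` dies too: either `A¹` lies
below its loop bound, or `m + i < L + s` and `Z² i m = 0` by induction. What remains is
`Z² s L * A¹ s s 0 = 0`, and the contact term is non-zero.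
-/

open Finset

section

variable {F : Type*}

/-- The vanishing of Lemma 3, in the form shared by `A¹` and `A²`. -/
def VanishesBelowLoopBound [Zero F] (A : ℕ → ℕ → ℕ → F) : Prop :=
  ∀ s i L, s < i → L + s ≤ i → A s i L = 0

theorem VanishesBelowLoopBound.of_max [Zero F] {A : ℕ → ℕ → ℕ → F} {ℓ : ℕ}
    (hA : ∀ s i L, s < max i ℓ → L + s ≤ max i ℓ → A s i L = 0) : VanishesBelowLoopBound A :=
  fun s i L hsi hLs => hA s i L (hsi.trans_le (le_max_left i ℓ)) (hLs.trans (le_max_left i ℓ))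

theorem Finset.sum_sum_eq_single_of_mem {α β M : Type*} [AddCommMonoid M] {s : Finset α}
    {t : Finset β} {f : α → β → M} (a : α) (b : β) (ha : a ∈ s) (hb : b ∈ t)
    (hf : ∀ x ∈ s, ∀ y ∈ t, (x, y) ≠ (a, b) → f x y = 0) :
    ∑ x ∈ s, ∑ y ∈ t, f x y = f a b := by
  rw [← sum_product', sum_eq_single_of_mem (a, b) (mem_product.2 ⟨ha, hb⟩)]
  rintro ⟨x, y⟩ hxy hne
  exact hf x (mem_product.1 hxy).1 y (mem_product.1 hxy).2 hne

variable {ℓ₁ s L m i : ℕ}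

theorem single_counterterm_mul_eq_zero [MulZeroClass F] {A : ℕ → ℕ → ℕ → F} {Z : ℕ → ℕ → F}
    (hA : VanishesBelowLoopBound A) (hZ : ∀ i m, 1 ≤ m → m + i ≤ ℓ₁ → Z i m = 0)
    (hm : 1 ≤ m) (hmL : m ≤ L) (hLs : L + s ≤ ℓ₁) : Z i m * A s i (L - m) = 0 := by
  by_cases hmi : m + i ≤ ℓ₁
  · rw [hZ i m hm hmi, zero_mul]
  · rw [hA s i (L - m) (by omega) (by omega), mul_zero]

theorem double_counterterm_mul_eq_zero [MulZeroClass F] {A : ℕ → ℕ → ℕ → F} {Z : ℕ → ℕ → F}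
    (hA : VanishesBelowLoopBound A) (hZ : ∀ i m, 3 ≤ i → 1 ≤ m → m + i < L + s → Z i m = 0)
    (hi : 3 ≤ i) (hm : 1 ≤ m) (hmL : m ≤ L) (hne : (m, i) ≠ (L, s)) :
    Z i m * A s i (L - m) = 0 := by
  by_cases hsi : s < i ∧ L - m + s ≤ i
  · rw [hA s i (L - m) hsi.1 hsi.2, mul_zero]
  · have hne' : ¬(m = L ∧ i = s) := fun h => hne (by rw [h.1, h.2])
    rw [hZ i m hi hm (by omega), zero_mul]

theorem master_sum_eq_diagonal [NonUnitalNonAssocSemiring F] {M : ℕ}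
    {A₁ A₂ : ℕ → ℕ → ℕ → F} {Z₁ Z₂ : ℕ → ℕ → F}
    (hA₁ : VanishesBelowLoopBound A₁) (hA₂ : VanishesBelowLoopBound A₂)
    (hZ₁ : ∀ i m, 1 ≤ m → m + i ≤ ℓ₁ → Z₁ i m = 0)
    (hZ₂ : ∀ i m, 3 ≤ i → 1 ≤ m → m + i < L + s → Z₂ i m = 0)
    (hs : 3 ≤ s) (hL : 1 ≤ L) (hsM : s ≤ M) (hLs : L + s ≤ ℓ₁) :
    ∑ m ∈ Icc 1 L, ∑ i ∈ Icc 3 M, (Z₁ i m * A₂ s i (L - m) + Z₂ i m * A₁ s i (L - m)) =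
      Z₂ s L * A₁ s s 0 := by
  rw [sum_sum_eq_single_of_mem L s (mem_Icc.2 ⟨hL, le_rfl⟩) (mem_Icc.2 ⟨hs, hsM⟩),
    single_counterterm_mul_eq_zero hA₂ hZ₁ hL le_rfl hLs, zero_add, Nat.sub_self]
  intro m hm i hi hne
  rw [mem_Icc] at hm hi
  rw [single_counterterm_mul_eq_zero hA₂ hZ₁ hm.1 hm.2 hLs,
    double_counterterm_mul_eq_zero hA₁ hZ₂ hi.1 hm.1 hm.2 hne, add_zero]

end

theorem two_insertion_nonrenormalization_general
    {F : Type*} [Field F] (ℓ₁ ℓ₂ M : ℕ)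
    (hM : ℓ₁ ≤ M)
    (A₁ A₂ : ℕ → ℕ → ℕ → F) (Z₁ Z₂ : ℕ → ℕ → F)
    (hA₁ : ∀ s i L, s < i → L + s ≤ i → A₁ s i L = 0)
    (hA₂ : ∀ s i L, s < max i ℓ₂ → L + s ≤ max i ℓ₂ → A₂ s i L = 0)
    (hcontact : ∀ s, 3 ≤ s → A₁ s s 0 ≠ 0)
    (hZ₁ : ∀ i m, 1 ≤ m → m + i ≤ ℓ₁ → Z₁ i m = 0)
    (hmaster : ∀ s L, 3 ≤ s → 1 ≤ L → L + s ≤ ℓ₁ →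
      ∑ m ∈ Finset.Icc 1 L, ∑ i ∈ Finset.Icc 3 M,
        (Z₁ i m * A₂ s i (L - m) + Z₂ i m * A₁ s i (L - m)) = 0) :
    ∀ s L, 3 ≤ s → 1 ≤ L → L + s ≤ ℓ₁ → Z₂ s L = 0 := by
  suffices h : ∀ n s L, L + s = n → 3 ≤ s → 1 ≤ L → L + s ≤ ℓ₁ → Z₂ s L = 0 from
    fun s L => h (L + s) s L rfl
  intro n
  induction n using Nat.strong_induction_on with
  | _ n ih =>
    rintro s L rfl hs hL hLs
    have hdiag := master_sum_eq_diagonal (M := M) hA₁ (.of_max hA₂) hZ₁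
      (fun i m hi hm hlt => ih (m + i) hlt i m rfl hi hm (by omega)) hs hL (by omega) hLs
    rw [hmaster s L hs hL hLs] at hdiag
    exact (mul_eq_zero.1 hdiag.symm).resolve_right (hcontact s hs)

/-- Abstract form of the two-insertion non-renormalization theorem
(Section 3.2, `N = 2`).  `A¹ s i L` (resp. `A² s i L`) is the finite part of
the `L`-loop `s`-point amplitude with a single insertion of a length-`i`
operator (resp. with insertions of a length-`i` operator and the fixed
length-`ℓ₂` operator); `Z¹ i m` (resp. `Z² i m`) is the simple-pole residue
at `m` loops of the single-insertion counterterm of the length-`ℓ₁` operator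
(resp. of the double-insertion counterterm of the pair `(ℓ₁, ℓ₂)`) into the
length-`i` operator.  Given the vanishings of Lemma 3, non-vanishing contact
terms of an on-shell basis, the single-insertion non-renormalization result,
and the master equations, all residues `Z² s L` with `s ≥ 3`, `L ≥ 1`,
`L + s ≤ ℓ₁` vanish. -/
theorem two_insertion_nonrenormalization
    {F : Type*} [Field F] (ℓ₁ ℓ₂ M : ℕ)
    (h21 : ℓ₂ ≤ ℓ₁) (h3 : 3 ≤ ℓ₂) (hM : ℓ₁ ≤ M)
    (A₁ A₂ : ℕ → ℕ → ℕ → F) (Z₁ Z₂ : ℕ → ℕ → F)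
    (hA₁ : ∀ s i L, s < i → L + s ≤ i → A₁ s i L = 0)
    (hA₂ : ∀ s i L, s < max i ℓ₂ → L + s ≤ max i ℓ₂ → A₂ s i L = 0)
    (hcontact : ∀ s, 3 ≤ s → A₁ s s 0 ≠ 0)
    (hZ₁ : ∀ i m, 1 ≤ m → m + i ≤ ℓ₁ → Z₁ i m = 0)
    (hmaster : ∀ s L, 3 ≤ s → 1 ≤ L → L + s ≤ ℓ₁ →
      ∑ m ∈ Finset.Icc 1 L, ∑ i ∈ Finset.Icc 3 M,
        (Z₁ i m * A₂ s i (L - m) + Z₂ i m * A₁ s i (L - m)) = 0) :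
    ∀ s L, 3 ≤ s → 1 ≤ L → L + s ≤ ℓ₁ → Z₂ s L = 0 :=
  two_insertion_nonrenormalization_general ℓ₁ ℓ₂ M hM A₁ A₂ Z₁ Z₂ hA₁ hA₂ hcontact hZ₁ hmaster
end
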